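/- Let N ≥ 3 and b > N. Define V(x) = 1/(1+|x|^b) on ℝ^N. Then there exist constants c, C > 0 such that for all |x| > 1, c·|x|^{1-N} ≤ I₁V(x) ≤ C·|x|^{1-N}. -/

import Mathlib

/-! Write `s = 1 - N` and split the integral at the ball `B(x, |x|/2)`. On that ball `|y| ≥ |x|/2`,
so `V ≲ |x|^(-b)`, while the kernel `|x - y|^s` integrates to `≍ |x|^(N+s)` over it; the product
`|x|^(N+s-b)` is at most `|x|^s` because `b > N`. Off the ball the kernel is `≲ |x|^s` and `V` is
integrable. For the lower bound, `V ≥ 1/2` and `|x - y| ≤ 2|x|` on the unit ball. -/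

open MeasureTheory Real Set Metric Module

theorem preimage_sub_left_ball {E : Type*} [SeminormedAddCommGroup E] (x : E) (R : ℝ) :
    (x - ·) ⁻¹' ball 0 R = ball x R := by
  ext y
  simp [dist_eq_norm, norm_sub_rev]

theorem one_div_one_add_rpow_le {r b : ℝ} (hr : 0 ≤ r) (hb : 0 ≤ b) :
    1 / (1 + r ^ b) ≤ 2 ^ b * (1 + r) ^ (-b) := by
  have hmax : (1 + r) ^ b ≤ 2 ^ b * max 1 r ^ b := by
    rw [← mul_rpow zero_le_two (by positivity)]
    exact rpow_le_rpow (by positivity) (by linarith [le_max_left 1 r, le_max_right 1 r]) hb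
  have hmax_le : max 1 r ^ b ≤ 1 + r ^ b := by
    rcases le_total 1 r with h | h
    · rw [max_eq_right h]; linarith
    · rw [max_eq_left h, one_rpow]; linarith [rpow_nonneg hr b]
  rw [rpow_neg (by positivity), ← div_eq_mul_inv,
    div_le_div_iff₀ (by positivity) (rpow_pos_of_pos (by positivity) b)]
  calc 1 * (1 + r) ^ b ≤ 2 ^ b * max 1 r ^ b := by rw [one_mul]; exact hmax
    _ ≤ 2 ^ b * (1 + r ^ b) := by gcongr

section PolyDecay

variable {E : Type*} [SeminormedAddCommGroup E]

noncomputable def polyDecay (b : ℝ) (y : E) : ℝ := 1 / (1 + ‖y‖ ^ b)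

theorem polyDecay_pos (b : ℝ) (y : E) : 0 < polyDecay b y := by
  unfold polyDecay; positivity

theorem polyDecay_le_one (b : ℝ) (y : E) : polyDecay b y ≤ 1 := by
  unfold polyDecay
  rw [div_le_one (by positivity)]
  linarith [rpow_nonneg (norm_nonneg y) b]

theorem polyDecay_le_rpow_neg {b t : ℝ} (hb : 0 ≤ b) (ht : 0 < t) {y : E} (hy : t ≤ ‖y‖) :
    polyDecay b y ≤ t ^ (-b) := by
  unfold polyDecay
  rw [rpow_neg ht.le, ← one_div]
  gcongr
  linarith [rpow_le_rpow ht.le hy hb]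

end PolyDecay

section HaarIntegrals

variable {E : Type*} [NormedAddCommGroup E] [NormedSpace ℝ E] [FiniteDimensional ℝ E]
  [MeasurableSpace E] [BorelSpace E] (μ : Measure E) [μ.IsAddHaarMeasure]

theorem integrableOn_ball_norm_rpow [Nontrivial E] {s : ℝ} (hs : -(finrank ℝ E : ℝ) < s)
    (R : ℝ) : IntegrableOn (fun z : E => ‖z‖ ^ s) (ball 0 R) μ :=
  integrableOn_ball_of_norm_le_rpow finrank_pos (C := 1) (α := -s) (by linarith)
    (ae_of_all _ fun z => by simp [abs_of_nonneg (rpow_nonneg (norm_nonneg z) s)])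
    (by fun_prop : Measurable fun z : E => ‖z‖ ^ s).aestronglyMeasurable

theorem setIntegral_ball_norm_rpow [Nontrivial E] {s R : ℝ} (hs : -(finrank ℝ E : ℝ) < s)
    (hR : 0 ≤ R) :
    ∫ z in ball 0 R, ‖z‖ ^ s ∂μ =
      finrank ℝ E / (finrank ℝ E + s) * μ.real (ball 0 1) * R ^ (finrank ℝ E + s) := by
  have hns : 0 < (finrank ℝ E : ℝ) + s := by linarith
  have hradial : ∫ z in ball 0 R, ‖z‖ ^ s ∂μ = ∫ z, (Iio R).indicator (· ^ s) ‖z‖ ∂μ := by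
    rw [← integral_indicator measurableSet_ball]
    congr 1 with z
    by_cases hz : ‖z‖ < R <;> simp [indicator, hz]
  have hline : ∫ r in Ioi (0 : ℝ), r ^ (finrank ℝ E - 1) • (Iio R).indicator (· ^ s) r =
      ∫ r in (0 : ℝ)..R, r ^ (finrank ℝ E + s - 1) := by
    rw [intervalIntegral.integral_of_le hR, integral_Ioc_eq_integral_Ioo,
      ← integral_indicator measurableSet_Ioo, ← integral_indicator measurableSet_Ioi]
    congr 1 with r
    by_cases h0 : 0 < r
    · by_cases hr : r < R
      · have : r ^ (finrank ℝ E - 1) * r ^ s = r ^ ((finrank ℝ E : ℝ) + s - 1) := by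
          rw [← rpow_natCast, ← rpow_add h0, Nat.cast_sub finrank_pos]
          ring_nf
        simp [indicator, h0, hr, this]
      · simp [indicator, h0, hr]
    · simp [indicator, h0]
  rw [hradial, integral_fun_norm_addHaar, hline, integral_rpow (by left; linarith),
    sub_add_cancel, zero_rpow hns.ne']
  simp only [nsmul_eq_mul, smul_eq_mul]
  ring

theorem setIntegral_ball_comp_sub_left {G : Type*} [NormedAddCommGroup G] [NormedSpace ℝ G]
    (f : E → G) (x : E) (R : ℝ) :
    ∫ y in ball x R, f (x - y) ∂μ = ∫ z in ball 0 R, f z ∂μ := by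
  rw [← preimage_sub_left_ball]
  exact (μ.measurePreserving_sub_left x).setIntegral_preimage_emb
    (measurableEmbedding_subLeft x) f (ball 0 R)

theorem MeasureTheory.IntegrableOn.comp_sub_left_ball {G : Type*} [NormedAddCommGroup G]
    {f : E → G} {R : ℝ} (hf : IntegrableOn f (ball 0 R) μ) (x : E) :
    IntegrableOn (fun y => f (x - y)) (ball x R) μ := by
  rw [← preimage_sub_left_ball]
  exact ((μ.measurePreserving_sub_left x).integrableOn_comp_preimage
    (measurableEmbedding_subLeft x)).2 hf

theorem MeasureTheory.Integrable.mul_norm_sub_rpow [Nontrivial E] {f : E → ℝ} {C s : ℝ}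
    (hf : Integrable f μ) (hfC : ∀ y, ‖f y‖ ≤ C) (hs : -(finrank ℝ E : ℝ) < s) (hs0 : s ≤ 0)
    (x : E) :
    Integrable (fun y => f y * ‖x - y‖ ^ s) μ := by
  have hnear : Integrable ((ball x 1).indicator fun y => C * ‖x - y‖ ^ s) μ :=
    (integrable_indicator_iff measurableSet_ball).2
      (((integrableOn_ball_norm_rpow μ hs 1).comp_sub_left_ball μ x).const_mul C)
  refine (hnear.add hf.norm).mono' (hf.aestronglyMeasurable.mul
    (by fun_prop : Measurable fun y : E => ‖x - y‖ ^ s).aestronglyMeasurable)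
    (ae_of_all _ fun y => ?_)
  rw [norm_mul, norm_of_nonneg (rpow_nonneg (norm_nonneg _) s), Pi.add_apply]
  by_cases hy : y ∈ ball x 1
  · rw [indicator_of_mem hy]
    have := mul_le_mul_of_nonneg_right (hfC y) (rpow_nonneg (norm_nonneg (x - y)) s)
    linarith [norm_nonneg (f y)]
  · rw [indicator_of_notMem hy, zero_add]
    rw [mem_ball, not_lt, dist_comm, dist_eq_norm] at hy
    exact mul_le_of_le_one_right (norm_nonneg _) (rpow_le_one_of_one_le_of_nonpos hy hs0)

theorem integrable_polyDecay {b : ℝ} (hb : (finrank ℝ E : ℝ) < b) :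
    Integrable (polyDecay b) μ :=
  ((integrable_one_add_norm hb).const_mul (2 ^ b)).mono'
    (by unfold polyDecay; fun_prop : Measurable (polyDecay (E := E) b)).aestronglyMeasurable
    (ae_of_all _ fun y => by
      rw [norm_of_nonneg (polyDecay_pos b y).le]
      exact one_div_one_add_rpow_le (norm_nonneg y) (hb.le.trans' (Nat.cast_nonneg _)))

variable [Nontrivial E] {b s : ℝ}

theorem integrable_polyDecay_mul_norm_sub_rpow (hb : (finrank ℝ E : ℝ) < b)
    (hs : -(finrank ℝ E : ℝ) < s) (hs0 : s ≤ 0) (x : E) :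
    Integrable (fun y => polyDecay b y * ‖x - y‖ ^ s) μ :=
  (integrable_polyDecay μ hb).mul_norm_sub_rpow μ
    (fun y => by rw [norm_of_nonneg (polyDecay_pos b y).le]; exact polyDecay_le_one b y) hs hs0 x

theorem exists_le_integral_polyDecay_mul_norm_sub_rpow (hb : (finrank ℝ E : ℝ) < b)
    (hs : -(finrank ℝ E : ℝ) < s) (hs0 : s ≤ 0) :
    ∃ c > 0, ∀ x : E, 1 ≤ ‖x‖ → c * ‖x‖ ^ s ≤ ∫ y, polyDecay b y * ‖x - y‖ ^ s ∂μ := by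
  refine ⟨μ.real (ball 0 1) * 2 ^ (s - 1),
    mul_pos (ENNReal.toReal_pos (measure_ball_pos μ 0 one_pos).ne' measure_ball_lt_top.ne)
      (rpow_pos_of_pos two_pos _), fun x hx => ?_⟩
  have hint := integrable_polyDecay_mul_norm_sub_rpow μ hb hs hs0 x
  have hpointwise :
      ∀ y ∈ ball (0 : E) 1, 2 ^ (s - 1) * ‖x‖ ^ s ≤ polyDecay b y * ‖x - y‖ ^ s := by
    intro y hy
    rw [mem_ball_zero_iff] at hy
    have hhalf : 1 / 2 ≤ polyDecay b y := by
      unfold polyDecay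
      gcongr
      linarith [rpow_le_one (norm_nonneg y) hy.le (hb.le.trans' (Nat.cast_nonneg _))]
    have hdist : ‖x - y‖ ≤ 2 * ‖x‖ := by linarith [norm_sub_le x y]
    have hdist_pos : 0 < ‖x - y‖ := by linarith [norm_sub_norm_le x y]
    calc 2 ^ (s - 1) * ‖x‖ ^ s = 1 / 2 * (2 * ‖x‖) ^ s := by
          rw [mul_rpow zero_le_two (norm_nonneg x), rpow_sub two_pos, rpow_one]; ring
      _ ≤ polyDecay b y * ‖x - y‖ ^ s :=
          mul_le_mul hhalf (rpow_le_rpow_of_nonpos hdist_pos hdist hs0)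
            (by positivity) (polyDecay_pos b y).le
  calc μ.real (ball 0 1) * 2 ^ (s - 1) * ‖x‖ ^ s
      = 2 ^ (s - 1) * ‖x‖ ^ s * μ.real (ball 0 1) := by ring
    _ ≤ ∫ y in ball 0 1, polyDecay b y * ‖x - y‖ ^ s ∂μ :=
        setIntegral_ge_of_const_le_real measurableSet_ball measure_ball_lt_top.ne hpointwise
          hint.integrableOn
    _ ≤ ∫ y, polyDecay b y * ‖x - y‖ ^ s ∂μ :=
        setIntegral_le_integral hint (ae_of_all _ fun y =>
          mul_nonneg (polyDecay_pos b y).le (rpow_nonneg (norm_nonneg _) s))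

theorem setIntegral_ball_polyDecay_mul_norm_sub_rpow_le (hb : 0 ≤ b)
    (hs : -(finrank ℝ E : ℝ) < s) {x : E} {t : ℝ} (ht : 0 < t) (htx : 2 * t ≤ ‖x‖) :
    ∫ y in ball x t, polyDecay b y * ‖x - y‖ ^ s ∂μ ≤
      finrank ℝ E / (finrank ℝ E + s) * μ.real (ball 0 1) * t ^ (finrank ℝ E + s - b) := by
  have hkernel : IntegrableOn (fun y => ‖x - y‖ ^ s) (ball x t) μ :=
    (integrableOn_ball_norm_rpow μ hs t).comp_sub_left_ball μ x
  have hfar_origin : ∀ y ∈ ball x t, polyDecay b y * ‖x - y‖ ^ s ≤ t ^ (-b) * ‖x - y‖ ^ s := by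
    intro y hy
    rw [mem_ball, dist_comm, dist_eq_norm] at hy
    exact mul_le_mul_of_nonneg_right
      (polyDecay_le_rpow_neg hb ht (by linarith [norm_sub_norm_le x y]))
      (rpow_nonneg (norm_nonneg _) s)
  calc ∫ y in ball x t, polyDecay b y * ‖x - y‖ ^ s ∂μ
      ≤ ∫ y in ball x t, t ^ (-b) * ‖x - y‖ ^ s ∂μ :=
        integral_mono_of_nonneg (ae_of_all _ fun y =>
          mul_nonneg (polyDecay_pos b y).le (rpow_nonneg (norm_nonneg _) s))
          (hkernel.const_mul _) (ae_restrict_of_forall_mem measurableSet_ball hfar_origin)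
    _ = t ^ (-b) *
          (finrank ℝ E / (finrank ℝ E + s) * μ.real (ball 0 1) * t ^ (finrank ℝ E + s)) := by
        rw [integral_const_mul, setIntegral_ball_comp_sub_left μ (fun z => ‖z‖ ^ s),
          setIntegral_ball_norm_rpow μ hs ht.le]
    _ = _ := by
        rw [sub_eq_neg_add, rpow_add ht (-b) (finrank ℝ E + s)]
        ring

theorem setIntegral_compl_ball_polyDecay_mul_norm_sub_rpow_le (hb : (finrank ℝ E : ℝ) < b)
    (hs : -(finrank ℝ E : ℝ) < s) (hs0 : s ≤ 0) (x : E) {t : ℝ} (ht : 0 < t) :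
    ∫ y in (ball x t)ᶜ, polyDecay b y * ‖x - y‖ ^ s ∂μ ≤ (∫ y, polyDecay b y ∂μ) * t ^ s := by
  have hV := integrable_polyDecay μ hb
  calc ∫ y in (ball x t)ᶜ, polyDecay b y * ‖x - y‖ ^ s ∂μ
      ≤ ∫ y in (ball x t)ᶜ, polyDecay b y * t ^ s ∂μ := by
        refine setIntegral_mono_on
          (integrable_polyDecay_mul_norm_sub_rpow μ hb hs hs0 x).integrableOn
          (hV.mul_const _).integrableOn measurableSet_ball.compl fun y hy => ?_
        rw [mem_compl_iff, mem_ball, not_lt, dist_comm, dist_eq_norm] at hy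
        exact mul_le_mul_of_nonneg_left (rpow_le_rpow_of_nonpos ht hy hs0)
          (polyDecay_pos b y).le
    _ ≤ (∫ y, polyDecay b y ∂μ) * t ^ s := by
        rw [integral_mul_const]
        exact mul_le_mul_of_nonneg_right
          (setIntegral_le_integral hV (ae_of_all _ fun y => (polyDecay_pos b y).le))
          (rpow_nonneg ht.le s)

theorem exists_integral_polyDecay_mul_norm_sub_rpow_le (hb : (finrank ℝ E : ℝ) < b)
    (hs : -(finrank ℝ E : ℝ) < s) (hs0 : s ≤ 0) :
    ∃ C > 0, ∀ x : E, 1 ≤ ‖x‖ → ∫ y, polyDecay b y * ‖x - y‖ ^ s ∂μ ≤ C * ‖x‖ ^ s := by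
  set n : ℝ := (finrank ℝ E : ℝ)
  set near : ℝ := n / (n + s) * μ.real (ball 0 1) * 2 ^ (b - n - s)
  set far : ℝ := (∫ y, polyDecay b y ∂μ) * 2 ^ (-s)
  have hnear : 0 < near :=
    mul_pos (mul_pos (div_pos (Nat.cast_pos.2 finrank_pos) (by linarith))
      (ENNReal.toReal_pos (measure_ball_pos μ 0 one_pos).ne' measure_ball_lt_top.ne))
      (rpow_pos_of_pos two_pos _)
  have hfar : 0 ≤ far := mul_nonneg
    (integral_nonneg fun y => (polyDecay_pos b y).le) (rpow_nonneg zero_le_two _)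
  refine ⟨near + far, by linarith, fun x hx => ?_⟩
  set t := ‖x‖ / 2 with ht_def
  have ht : 0 < t := half_pos (by linarith)
  have half_rpow (p : ℝ) : t ^ p = 2 ^ (-p) * ‖x‖ ^ p := by
    rw [div_rpow (norm_nonneg x) zero_le_two, rpow_neg zero_le_two]
    ring
  have hdecay : ‖x‖ ^ (n + s - b) ≤ ‖x‖ ^ s := rpow_le_rpow_of_exponent_le hx (by linarith)
  rw [← integral_add_compl measurableSet_ball
    (integrable_polyDecay_mul_norm_sub_rpow μ hb hs hs0 x)]
  calc _ ≤ n / (n + s) * μ.real (ball 0 1) * t ^ (n + s - b) +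
          (∫ y, polyDecay b y ∂μ) * t ^ s :=
        add_le_add
          (setIntegral_ball_polyDecay_mul_norm_sub_rpow_le μ (hb.le.trans' (Nat.cast_nonneg _))
            hs ht (by linarith [ht_def]))
          (setIntegral_compl_ball_polyDecay_mul_norm_sub_rpow_le μ hb hs hs0 x ht)
    _ = near * ‖x‖ ^ (n + s - b) + far * ‖x‖ ^ s := by
        rw [half_rpow, half_rpow, show -(n + s - b) = b - n - s by ring]
        ring
    _ ≤ (near + far) * ‖x‖ ^ s := by
        nlinarith [mul_le_mul_of_nonneg_left hdecay hnear.le]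

end HaarIntegrals

/-- For `N ≥ 3`, `b > N`, `V x = 1/(1+|x|^b)`, one has
`I₁V(x) ≍ |x|^(1-N)` for `|x| > 1`. -/
theorem stmt2 (N : ℕ) (hN : 3 ≤ N) (b : ℝ) (hb : (N : ℝ) < b) :
    ∃ c C : ℝ, 0 < c ∧ 0 < C ∧
      ∀ x : EuclideanSpace ℝ (Fin N), 1 < ‖x‖ →
        c * ‖x‖ ^ (1 - (N : ℝ)) ≤
          (Real.Gamma (((N : ℝ) - 1) / 2) /
              (π ^ ((N : ℝ) / 2) * 2 * Real.Gamma (1 / 2))) *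
            ∫ y : EuclideanSpace ℝ (Fin N),
              (1 / (1 + ‖y‖ ^ b)) / ‖x - y‖ ^ ((N : ℝ) - 1) ∧
        (Real.Gamma (((N : ℝ) - 1) / 2) /
              (π ^ ((N : ℝ) / 2) * 2 * Real.Gamma (1 / 2))) *
            ∫ y : EuclideanSpace ℝ (Fin N),
              (1 / (1 + ‖y‖ ^ b)) / ‖x - y‖ ^ ((N : ℝ) - 1) ≤ C * ‖x‖ ^ (1 - (N : ℝ)) := by
  have : Nonempty (Fin N) := ⟨⟨0, by omega⟩⟩
  have hdim : (finrank ℝ (EuclideanSpace ℝ (Fin N)) : ℝ) = N := by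
    rw [finrank_euclideanSpace_fin]
  have hN' : (3 : ℝ) ≤ N := by exact_mod_cast hN
  have hb' : (finrank ℝ (EuclideanSpace ℝ (Fin N)) : ℝ) < b := hdim ▸ hb
  have hs : -(finrank ℝ (EuclideanSpace ℝ (Fin N)) : ℝ) < 1 - N := by rw [hdim]; linarith
  have hs0 : (1 : ℝ) - N ≤ 0 := by linarith
  set K := Real.Gamma (((N : ℝ) - 1) / 2) / (π ^ ((N : ℝ) / 2) * 2 * Real.Gamma (1 / 2))
  have hK : 0 < K :=
    div_pos (Gamma_pos_of_pos (by linarith))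
      (mul_pos (by positivity) (Gamma_pos_of_pos one_half_pos))
  have hkernel (x y : EuclideanSpace ℝ (Fin N)) :
      1 / (1 + ‖y‖ ^ b) / ‖x - y‖ ^ ((N : ℝ) - 1) =
        polyDecay b y * ‖x - y‖ ^ (1 - (N : ℝ)) := by
    rw [polyDecay, div_eq_mul_inv, ← rpow_neg (norm_nonneg _), neg_sub]
  obtain ⟨c, hc, hlower⟩ := exists_le_integral_polyDecay_mul_norm_sub_rpow volume hb' hs hs0
  obtain ⟨C, hC, hupper⟩ := exists_integral_polyDecay_mul_norm_sub_rpow_le volume hb' hs hs0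
  refine ⟨K * c, K * C, mul_pos hK hc, mul_pos hK hC, fun x hx => ?_⟩
  simp only [hkernel, mul_assoc]
  exact ⟨mul_le_mul_of_nonneg_left (hlower x hx.le) hK.le,
    mul_le_mul_of_nonneg_left (hupper x hx.le) hK.le⟩
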